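/- Fix $\rho \geq 0$, a sample point $\hat{\xi} = (\hat{d}, \hat{e})$, bounds $\underline{d}_i \leq \hat{d}_i \leq \overline{d}_i$ and $\underline{e} \leq \hat{e} \leq \overline{e}$, binary assignment $y \in \{0,1\}^I$, and costs $c^o, c^g \geq 0$. Define $h(\xi) = \max_{\beta \in [-c^g, c^o]} (\sum_i d_i y_i + e - \mathcal{L})\beta - \rho \sum_i |d_i - \hat{d}_i| y_i - \rho |e - \hat{e}|$ over the box $\mathcal{S} = \prod_i [\underline{d}_i, \overline{d}_i] \times [\underline{e}, \overline{e}]$. Then $\sup_{\xi \in \mathcal{S}} h(\xi)$ is attained at a point where each coordinate $d_i$ with $y_i = 1$ lies in $\{\underline{d}_i, \hat{d}_i, \overline{d}_i\}$ and $e \in \{\underline{e}, \hat{e}, \overline{e}\}$. -/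
import Mathlib

private lemma oneDpos (a ρ lo that hi t s : ℝ) (hρ : 0 ≤ ρ) (ha : 0 ≤ a)
    (h1 : lo ≤ that) (h2 : that ≤ hi) (ht1 : lo ≤ t) (ht2 : t ≤ hi)
    (hs : s = if ρ ≤ a then hi else that) :
    a * t - ρ * |t - that| ≤ a * s - ρ * |s - that| := by
  subst hs
  split_ifs with h
  · rcases le_total t that with h3 | h3
    · rw [abs_of_nonpos (show t - that ≤ 0 by linarith),
        abs_of_nonneg (show (0:ℝ) ≤ hi - that by linarith)]; nlinarith
    · rw [abs_of_nonneg (show (0:ℝ) ≤ t - that by linarith),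
        abs_of_nonneg (show (0:ℝ) ≤ hi - that by linarith)]; nlinarith
  · push_neg at h
    simp only [sub_self, abs_zero, mul_zero, sub_zero]
    rcases le_total t that with h3 | h3
    · rw [abs_of_nonpos (show t - that ≤ 0 by linarith)]; nlinarith
    · rw [abs_of_nonneg (show (0:ℝ) ≤ t - that by linarith)]; nlinarith

private lemma oneDneg (a ρ lo that hi t s : ℝ) (hρ : 0 ≤ ρ) (ha : 0 ≤ a)
    (h1 : lo ≤ that) (h2 : that ≤ hi) (ht1 : lo ≤ t) (ht2 : t ≤ hi)
    (hs : s = if ρ ≤ a then lo else that) :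
    -(a * t) - ρ * |t - that| ≤ -(a * s) - ρ * |s - that| := by
  subst hs
  split_ifs with h
  · rcases le_total t that with h3 | h3
    · rw [abs_of_nonpos (show t - that ≤ 0 by linarith),
        abs_of_nonpos (show lo - that ≤ 0 by linarith)]; nlinarith
    · rw [abs_of_nonneg (show (0:ℝ) ≤ t - that by linarith),
        abs_of_nonpos (show lo - that ≤ 0 by linarith)]; nlinarith
  · push_neg at h
    simp only [sub_self, abs_zero, mul_zero, sub_zero]
    rcases le_total t that with h3 | h3
    · rw [abs_of_nonpos (show t - that ≤ 0 by linarith)]; nlinarith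
    · rw [abs_of_nonneg (show (0:ℝ) ≤ t - that by linarith)]; nlinarith

/-- The inner supremum of the Wasserstein DRO reformulation over the support box is
attained at a point whose assigned coordinates lie in {lower bound, sample, upper bound}. -/
theorem stmt_7 (I : ℕ) (ρ co cg L : ℝ) (hρ : 0 ≤ ρ) (hco : 0 ≤ co) (hcg : 0 ≤ cg)
    (dlo dhat dhi : Fin I → ℝ) (elo ehat ehi : ℝ)
    (hd : ∀ i, dlo i ≤ dhat i ∧ dhat i ≤ dhi i) (he : elo ≤ ehat ∧ ehat ≤ ehi)
    (y : Fin I → ℝ) (hy : ∀ i, y i = 0 ∨ y i = 1) :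
    ∃ dstar : Fin I → ℝ, ∃ estar : ℝ,
      (∀ i, dstar i ∈ Set.Icc (dlo i) (dhi i)) ∧ estar ∈ Set.Icc elo ehi ∧
      (∀ i, y i = 1 → dstar i = dlo i ∨ dstar i = dhat i ∨ dstar i = dhi i) ∧
      (estar = elo ∨ estar = ehat ∨ estar = ehi) ∧
      (∀ d : Fin I → ℝ, ∀ e : ℝ,
        (∀ i, d i ∈ Set.Icc (dlo i) (dhi i)) → e ∈ Set.Icc elo ehi →
        max ((∑ i, d i * y i + e - L) * co) (-(∑ i, d i * y i + e - L) * cg)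
            - ρ * ((∑ i, |d i - dhat i| * y i) + |e - ehat|)
          ≤ max ((∑ i, dstar i * y i + estar - L) * co)
                (-(∑ i, dstar i * y i + estar - L) * cg)
            - ρ * ((∑ i, |dstar i - dhat i| * y i) + |estar - ehat|)) := by
  classical
  set dA : Fin I → ℝ := fun i => if ρ ≤ co ∧ y i = 1 then dhi i else dhat i with hdA
  set eA : ℝ := if ρ ≤ co then ehi else ehat with heA
  set dB : Fin I → ℝ := fun i => if ρ ≤ cg ∧ y i = 1 then dlo i else dhat i with hdB
  set eB : ℝ := if ρ ≤ cg then elo else ehat with heB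
  -- the two branch values
  set valA : (Fin I → ℝ) → ℝ → ℝ := fun d e =>
    (∑ i, d i * y i + e - L) * co - ρ * ((∑ i, |d i - dhat i| * y i) + |e - ehat|) with hvalA
  set valB : (Fin I → ℝ) → ℝ → ℝ := fun d e =>
    -(∑ i, d i * y i + e - L) * cg - ρ * ((∑ i, |d i - dhat i| * y i) + |e - ehat|) with hvalB
  -- membership facts
  have hdAmem : ∀ i, dA i ∈ Set.Icc (dlo i) (dhi i) := by
    intro i; rw [hdA]; dsimp only
    split_ifs with h
    · exact ⟨le_trans (hd i).1 (hd i).2, le_refl _⟩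
    · exact ⟨(hd i).1, (hd i).2⟩
  have hdBmem : ∀ i, dB i ∈ Set.Icc (dlo i) (dhi i) := by
    intro i; rw [hdB]; dsimp only
    split_ifs with h
    · exact ⟨le_refl _, le_trans (hd i).1 (hd i).2⟩
    · exact ⟨(hd i).1, (hd i).2⟩
  have heAmem : eA ∈ Set.Icc elo ehi := by
    rw [heA]; split_ifs with h
    · exact ⟨le_trans he.1 he.2, le_refl _⟩
    · exact ⟨he.1, he.2⟩
  have heBmem : eB ∈ Set.Icc elo ehi := by
    rw [heB]; split_ifs with h
    · exact ⟨le_refl _, le_trans he.1 he.2⟩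
    · exact ⟨he.1, he.2⟩
  -- key branch inequalities
  have keyA : ∀ d : Fin I → ℝ, ∀ e : ℝ, (∀ i, d i ∈ Set.Icc (dlo i) (dhi i)) →
      e ∈ Set.Icc elo ehi → valA d e ≤ valA dA eA := by
    intro d e hdm hem
    have hsum : ∀ i ∈ Finset.univ, d i * y i * co - ρ * (|d i - dhat i| * y i)
        ≤ dA i * y i * co - ρ * (|dA i - dhat i| * y i) := by
      intro i _
      rcases hy i with h0 | h1
      · have hA0 : dA i = dhat i := by
          rw [hdA]; dsimp only; rw [if_neg]; rintro ⟨-, h⟩; rw [h0] at h; norm_num at h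
        rw [h0, hA0]; ring_nf; simp
      · have hA1 : dA i = if ρ ≤ co then dhi i else dhat i := by
          rw [hdA]; dsimp only; simp [h1]
        have := oneDpos co ρ (dlo i) (dhat i) (dhi i) (d i) (dA i) hρ hco
          (hd i).1 (hd i).2 (hdm i).1 (hdm i).2 hA1
        rw [h1]; ring_nf; ring_nf at this; linarith
    have hsum2 := Finset.sum_le_sum hsum
    rw [Finset.sum_sub_distrib, Finset.sum_sub_distrib] at hsum2
    have hE := oneDpos co ρ elo ehat ehi e eA hρ hco he.1 he.2 hem.1 hem.2 heA
    have e1 : (∑ i, d i * y i) * co = ∑ i, d i * y i * co := Finset.sum_mul _ _ _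
    have e2 : ρ * (∑ i, |d i - dhat i| * y i) = ∑ i, ρ * (|d i - dhat i| * y i) :=
      Finset.mul_sum _ _ _
    have e3 : (∑ i, dA i * y i) * co = ∑ i, dA i * y i * co := Finset.sum_mul _ _ _
    have e4 : ρ * (∑ i, |dA i - dhat i| * y i) = ∑ i, ρ * (|dA i - dhat i| * y i) :=
      Finset.mul_sum _ _ _
    have ex1 : (∑ i, d i * y i + e - L) * co
        = (∑ i, d i * y i) * co + co * e - L * co := by ring
    have ex2 : (∑ i, dA i * y i + eA - L) * co
        = (∑ i, dA i * y i) * co + co * eA - L * co := by ring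
    rw [hvalA]; dsimp only
    rw [ex1, ex2, mul_add, mul_add]
    linarith
  have keyB : ∀ d : Fin I → ℝ, ∀ e : ℝ, (∀ i, d i ∈ Set.Icc (dlo i) (dhi i)) →
      e ∈ Set.Icc elo ehi → valB d e ≤ valB dB eB := by
    intro d e hdm hem
    have hsum : ∀ i ∈ Finset.univ, -(d i * y i * cg) - ρ * (|d i - dhat i| * y i)
        ≤ -(dB i * y i * cg) - ρ * (|dB i - dhat i| * y i) := by
      intro i _
      rcases hy i with h0 | h1
      · have hB0 : dB i = dhat i := by
          rw [hdB]; dsimp only; rw [if_neg]; rintro ⟨-, h⟩; rw [h0] at h; norm_num at h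
        rw [h0, hB0]; ring_nf; simp
      · have hB1 : dB i = if ρ ≤ cg then dlo i else dhat i := by
          rw [hdB]; dsimp only; simp [h1]
        have := oneDneg cg ρ (dlo i) (dhat i) (dhi i) (d i) (dB i) hρ hcg
          (hd i).1 (hd i).2 (hdm i).1 (hdm i).2 hB1
        rw [h1]; ring_nf; ring_nf at this; linarith
    have hsum2 := Finset.sum_le_sum hsum
    rw [Finset.sum_sub_distrib, Finset.sum_sub_distrib] at hsum2
    have hE := oneDneg cg ρ elo ehat ehi e eB hρ hcg he.1 he.2 hem.1 hem.2 heB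
    have e1 : ∑ i, -(d i * y i * cg) = -((∑ i, d i * y i) * cg) := by
      rw [Finset.sum_neg_distrib, Finset.sum_mul]
    have e2 : ρ * (∑ i, |d i - dhat i| * y i) = ∑ i, ρ * (|d i - dhat i| * y i) :=
      Finset.mul_sum _ _ _
    have e3 : ∑ i, -(dB i * y i * cg) = -((∑ i, dB i * y i) * cg) := by
      rw [Finset.sum_neg_distrib, Finset.sum_mul]
    have e4 : ρ * (∑ i, |dB i - dhat i| * y i) = ∑ i, ρ * (|dB i - dhat i| * y i) :=
      Finset.mul_sum _ _ _
    have ex1 : -(∑ i, d i * y i + e - L) * cg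
        = -((∑ i, d i * y i) * cg) + -(cg * e) + L * cg := by ring
    have ex2 : -(∑ i, dB i * y i + eB - L) * cg
        = -((∑ i, dB i * y i) * cg) + -(cg * eB) + L * cg := by ring
    rw [hvalB]; dsimp only
    rw [ex1, ex2, mul_add, mul_add]
    linarith
  -- objective equals max of the branch values
  have hobj : ∀ d : Fin I → ℝ, ∀ e : ℝ,
      max ((∑ i, d i * y i + e - L) * co) (-(∑ i, d i * y i + e - L) * cg)
        - ρ * ((∑ i, |d i - dhat i| * y i) + |e - ehat|) = max (valA d e) (valB d e) := by
    intro d e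
    rw [hvalA, hvalB]; dsimp only
    rw [max_sub_sub_right]
  have cand : ∀ d : Fin I → ℝ, ∀ e : ℝ,
      (∀ i, d i ∈ Set.Icc (dlo i) (dhi i)) → e ∈ Set.Icc elo ehi →
      max ((∑ i, d i * y i + e - L) * co) (-(∑ i, d i * y i + e - L) * cg)
        - ρ * ((∑ i, |d i - dhat i| * y i) + |e - ehat|)
      ≤ max (max (valA dA eA) (valB dA eA)) (max (valA dB eB) (valB dB eB)) := by
    intro d e hdm hem
    rw [hobj]
    refine max_le ?_ ?_
    · exact le_trans (keyA d e hdm hem) (le_trans (le_max_left _ _) (le_max_left _ _))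
    · exact le_trans (keyB d e hdm hem) (le_trans (le_max_right _ _) (le_max_right _ _))
  rcases le_total (max (valA dA eA) (valB dA eA)) (max (valA dB eB) (valB dB eB)) with hc | hc
  · refine ⟨dB, eB, hdBmem, heBmem, ?_, ?_, ?_⟩
    · intro i h1
      rw [hdB]; dsimp only; split_ifs with h
      · exact Or.inl rfl
      · exact Or.inr (Or.inl rfl)
    · rw [heB]; split_ifs with h
      · exact Or.inl rfl
      · exact Or.inr (Or.inl rfl)
    · intro d e hdm hem
      rw [hobj dB eB]
      exact le_trans (cand d e hdm hem) (max_le hc (le_refl _))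
  · refine ⟨dA, eA, hdAmem, heAmem, ?_, ?_, ?_⟩
    · intro i h1
      rw [hdA]; dsimp only; split_ifs with h
      · exact Or.inr (Or.inr rfl)
      · exact Or.inr (Or.inl rfl)
    · rw [heA]; split_ifs with h
      · exact Or.inr (Or.inr rfl)
      · exact Or.inr (Or.inl rfl)
    · intro d e hdm hem
      rw [hobj dA eA]
      exact le_trans (cand d e hdm hem) (max_le (le_refl _) hc)
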